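/- For 0 < ε < 1, the set K = {(x_n) ∈ c_0 : |x_n| ≤ ε^n} is a connected compact set satisfying (e_n(K))_n ∈ ℓ_1 and limsup_{n→∞} e_n(K)^{1/n} = 1. -/

import Mathlib

/-!
Keeping the first `m` coordinates of a point of `K` on a grid of mesh `ε ^ m` in `ℂ` (the later
coordinates are already `ε ^ m`-small) covers `K` by `exp (O(m²))` balls of radius `2 ε ^ m`;
hence `e_n(K) ≤ 2 ε ^ (c √n)`, which is summable. Conversely, the points whose first `m`
coordinates are multiples of `(ε / 2) ^ m` in `[0, ε ^ m]`, and whose other coordinates vanish,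
form a `(ε / 2) ^ m`-separated subset of `K` with `2 ^ (m²)` elements, so by pigeonhole
`e_n(K) ≥ (ε / 2) ^ (√n + 2)`. Together with `e_n(K) ≤ 1` this gives `e_n(K) ^ (1 / n) → 1`.
`K` is convex, hence connected, and it is closed and totally bounded, hence compact.
-/

open Filter Metric Set Topology

/-- The `n`-th dyadic entropy number of a set `L` in a metric space: the infimum of
radii `ε > 0` such that `L` can be covered by `2^(n-1)` balls of radius `ε`. -/
noncomputable def entropyNum {X : Type*} [MetricSpace X] (n : ℕ) (L : Set X) : ℝ :=
  sInf {ε : ℝ | 0 < ε ∧ ∃ s : Finset X, s.card ≤ 2 ^ (n - 1) ∧ L ⊆ ⋃ x ∈ s, Metric.ball x ε}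

/-- The covering number `N(L, ε)`: minimal number of `ε`-balls needed to cover `L`. -/
noncomputable def coveringNum {X : Type*} [MetricSpace X] (L : Set X) (ε : ℝ) : ℕ :=
  sInf {n : ℕ | ∃ s : Finset X, s.card = n ∧ L ⊆ ⋃ x ∈ s, Metric.ball x ε}

/-- The upper box (counting) dimension of `L`. -/
noncomputable def upperBoxDim {X : Type*} [MetricSpace X] (L : Set X) : EReal :=
  Filter.limsup (fun ε : ℝ => ((Real.log (coveringNum L ε) / (-Real.log ε) : ℝ) : EReal)) (𝓝[>] 0)

/-- The lower box (counting) dimension of `L`. -/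
noncomputable def lowerBoxDim {X : Type*} [MetricSpace X] (L : Set X) : EReal :=
  Filter.liminf (fun ε : ℝ => ((Real.log (coveringNum L ε) / (-Real.log ε) : ℝ) : EReal)) (𝓝[>] 0)

section EntropyNumbers

variable {X : Type*} [MetricSpace X] {n : ℕ} {L : Set X}

lemma entropyNum_nonneg : 0 ≤ entropyNum n L :=
  Real.sInf_nonneg fun _ hr => hr.1.le

lemma entropyNum_le_of_subset_iUnion_ball {s : Finset X} {r : ℝ} (hr : 0 < r)
    (hs : s.card ≤ 2 ^ (n - 1)) (hL : L ⊆ ⋃ x ∈ s, ball x r) : entropyNum n L ≤ r :=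
  csInf_le ⟨0, fun _ hr => hr.1.le⟩ ⟨hr, s, hs, hL⟩

lemma entropyNum_le_of_subset_ball {x : X} {r : ℝ} (hr : 0 < r) (hL : L ⊆ ball x r) :
    entropyNum n L ≤ r :=
  entropyNum_le_of_subset_iUnion_ball (s := {x}) hr (by simpa using Nat.one_le_two_pow)
    (by simpa using hL)

/-- Pigeonhole: two points of a `δ`-separated family cannot share a ball of radius `δ / 2`.
Boundedness of `L` makes the set of admissible radii nonempty, so that its `sInf` is not the
junk value `0`. -/
lemma le_entropyNum_of_separated {ι : Type*} [Fintype ι] {φ : ι → X} {δ : ℝ}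
    (hL : Bornology.IsBounded L) (hφL : ∀ i, φ i ∈ L)
    (hsep : Pairwise fun i j => δ ≤ dist (φ i) (φ j)) (hcard : 2 ^ (n - 1) < Fintype.card ι) :
    δ / 2 ≤ entropyNum n L := by
  obtain ⟨i₀⟩ : Nonempty ι := Fintype.card_pos_iff.1 (Nat.zero_lt_of_lt hcard)
  obtain ⟨R, hR, hLR⟩ := hL.subset_ball_lt 0 (φ i₀)
  refine le_csInf ⟨R, hR, {φ i₀}, by simpa using Nat.one_le_two_pow, by simpa using hLR⟩ ?_
  rintro r ⟨-, s, hs, hcover⟩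
  by_contra! hr
  have hcenter : ∀ i, ∃ x : s, φ i ∈ ball (x : X) r := fun i => by
    simpa using hcover (hφL i)
  choose center hcenter using hcenter
  obtain ⟨i, j, hij, hcij⟩ := Fintype.exists_ne_map_eq_of_card_lt center
    (by rw [Fintype.card_coe]; omega)
  have hi := mem_ball.1 (hcenter i)
  have hj := mem_ball.1 (hcenter j)
  rw [hcij] at hi
  linarith [hsep hij, dist_triangle_right (φ i) (φ j) (center j)]

end EntropyNumbers

lemma summable_pow_of_le_mul_sq {q : ℝ} (hq0 : 0 < q) (hq1 : q < 1) {k : ℕ → ℕ} {c : ℕ}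
    (hk : ∀ n, n + 1 ≤ c * (k n + 1) ^ 2) : Summable fun n => q ^ k n := by
  obtain ⟨M, hM⟩ : ∃ M, ∀ j : ℕ, ((j : ℝ) + 1) ^ 4 * q ^ (j + 1) ≤ M := by
    have h := (tendsto_pow_const_mul_const_pow_of_abs_lt_one 4
      (by rwa [abs_of_pos hq0])).comp (tendsto_add_atTop_nat 1)
    obtain ⟨M, hM⟩ := h.bddAbove_range
    exact ⟨M, fun j => by simpa using hM ⟨j, rfl⟩⟩
  have hsum : Summable fun n : ℕ => M / q * c ^ 2 * (1 / ((n : ℝ) + 1) ^ 2) := by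
    refine Summable.mul_left _ ?_
    exact_mod_cast (summable_nat_add_iff 1).2 (Real.summable_one_div_nat_pow.2 one_lt_two)
  refine hsum.of_nonneg_of_le (fun n => by positivity) fun n => ?_
  have hn : ((n : ℝ) + 1) ^ 2 ≤ (c : ℝ) ^ 2 * ((k n : ℝ) + 1) ^ 4 := by
    have : (n : ℝ) + 1 ≤ c * ((k n : ℝ) + 1) ^ 2 := by exact_mod_cast hk n
    nlinarith
  have hq : ((k n : ℝ) + 1) ^ 4 * q ^ k n ≤ M / q := by
    rw [le_div_iff₀ hq0, mul_assoc, ← pow_succ]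
    exact hM (k n)
  rw [mul_one_div, le_div_iff₀ (by positivity)]
  calc q ^ k n * ((n : ℝ) + 1) ^ 2 ≤ q ^ k n * ((c : ℝ) ^ 2 * ((k n : ℝ) + 1) ^ 4) := by gcongr
    _ = ((k n : ℝ) + 1) ^ 4 * q ^ k n * c ^ 2 := by ring
    _ ≤ M / q * c ^ 2 := by gcongr

lemma exists_int_abs_le_ceil_abs_sub_mul_le {ρ R t : ℝ} (hρ : 0 < ρ) (ht : |t| ≤ R) :
    ∃ a : ℤ, |a| ≤ ⌈R / ρ⌉ ∧ |t - ρ * a| ≤ ρ / 2 := by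
  refine ⟨round (t / ρ), ?_, ?_⟩
  · have htρ : |t / ρ| ≤ R / ρ := by
      rw [abs_div, abs_of_pos hρ]; gcongr
    have hround : |(round (t / ρ) : ℝ)| - |t / ρ| ≤ 1 / 2 :=
      (abs_sub_abs_le_abs_sub _ _).trans (by rw [abs_sub_comm]; exact abs_sub_round _)
    have hlt : (|round (t / ρ)| : ℝ) < ⌈R / ρ⌉ + 1 := by linarith [Int.le_ceil (R / ρ)]
    exact Int.lt_add_one_iff.1 (by exact_mod_cast hlt)
  · rw [show t - ρ * round (t / ρ) = ρ * (t / ρ - round (t / ρ)) by field_simp, abs_mul,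
      abs_of_pos hρ]
    nlinarith [abs_sub_round (t / ρ)]

lemma exists_finset_complex_net {ρ R : ℝ} (hρ : 0 < ρ) (hρR : ρ ≤ R) :
    ∃ G : Finset ℂ, (G.card : ℝ) ≤ (5 * R / ρ) ^ 2 ∧ ∀ z : ℂ, ‖z‖ ≤ R → ∃ w ∈ G, ‖z - w‖ ≤ ρ := by
  set N := ⌈R / ρ⌉
  set I := Finset.Icc (-N) N
  refine ⟨(I ×ˢ I).image fun p => (ρ : ℂ) * (p.1 + p.2 * Complex.I), ?_, fun z hz => ?_⟩
  · have hN : (N : ℝ) < R / ρ + 1 := Int.ceil_lt_add_one _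
    have hRρ : 1 ≤ R / ρ := by rwa [one_le_div hρ]
    have hI : (I.card : ℝ) = 2 * N + 1 := by
      have : 0 ≤ N := Int.ceil_nonneg (by positivity)
      have : (I.card : ℤ) = 2 * N + 1 := by simp only [I, Int.card_Icc]; omega
      exact_mod_cast this
    calc (((I ×ˢ I).image _).card : ℝ) ≤ ((I ×ˢ I).card : ℝ) := by
          exact_mod_cast Finset.card_image_le
      _ = (2 * N + 1) ^ 2 := by rw [Finset.card_product, Nat.cast_mul, hI, sq]
      _ ≤ (5 * R / ρ) ^ 2 := by
          rw [mul_div_assoc]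
          gcongr
          linarith
  · obtain ⟨a, ha, hre⟩ :=
      exists_int_abs_le_ceil_abs_sub_mul_le hρ ((Complex.abs_re_le_norm z).trans hz)
    obtain ⟨b, hb, him⟩ :=
      exists_int_abs_le_ceil_abs_sub_mul_le hρ ((Complex.abs_im_le_norm z).trans hz)
    refine ⟨ρ * (a + b * Complex.I), Finset.mem_image.2 ⟨(a, b), Finset.mem_product.2
      ⟨Finset.mem_Icc.2 (abs_le.1 ha), Finset.mem_Icc.2 (abs_le.1 hb)⟩, rfl⟩, ?_⟩
    refine (Complex.norm_le_abs_re_add_abs_im _).trans ?_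
    simp only [Complex.sub_re, Complex.sub_im, Complex.mul_re, Complex.mul_im,
      Complex.ofReal_re, Complex.ofReal_im, Complex.add_re, Complex.add_im,
      Complex.intCast_re, Complex.intCast_im, Complex.I_re, Complex.I_im,
      mul_zero, sub_zero, zero_mul, add_zero, mul_one, zero_add]
    linarith

open ZeroAtInfty

namespace ZeroAtInftyContinuousMap

section

variable {α β : Type*} [TopologicalSpace α] [PseudoMetricSpace β] [Zero β]

lemma dist_apply_le_dist (f g : C₀(α, β)) (a : α) : dist (f a) (g a) ≤ dist f g :=
  BoundedContinuousFunction.dist_coe_le_dist (f := f.toBCF) (g := g.toBCF) a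

lemma dist_le_of_forall_dist_apply_le {f g : C₀(α, β)} {C : ℝ} (hC : 0 ≤ C)
    (h : ∀ a, dist (f a) (g a) ≤ C) : dist f g ≤ C :=
  (BoundedContinuousFunction.dist_le (f := f.toBCF) (g := g.toBCF) hC).2 h

lemma continuous_apply (a : α) : Continuous fun f : C₀(α, β) => f a :=
  (continuous_eval_const (F := BoundedContinuousFunction α β) a).comp isometry_toBCF.continuous

end

def ofFin {β : Type*} [TopologicalSpace β] [Zero β] {m : ℕ} (v : Fin m → β) : C₀(ℕ, β) where
  toFun n := if h : n < m then v ⟨n, h⟩ else 0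
  continuous_toFun := continuous_of_discreteTopology
  zero_at_infty' := by
    rw [cocompact_eq_cofinite, Nat.cofinite_eq_atTop]
    refine tendsto_const_nhds.congr' ?_
    filter_upwards [eventually_ge_atTop m] with n hn
    simp [Nat.not_lt.2 hn]

lemma ofFin_apply_of_lt {β : Type*} [TopologicalSpace β] [Zero β] {m : ℕ} (v : Fin m → β)
    {n : ℕ} (hn : n < m) : ofFin v n = v ⟨n, hn⟩ :=
  dif_pos hn

lemma ofFin_apply_of_le {β : Type*} [TopologicalSpace β] [Zero β] {m : ℕ} (v : Fin m → β)
    {n : ℕ} (hn : m ≤ n) : ofFin v n = 0 :=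
  dif_neg (Nat.not_lt.2 hn)

end ZeroAtInftyContinuousMap

open ZeroAtInftyContinuousMap

def seqBox (a : ℕ → ℝ) : Set C₀(ℕ, ℂ) := {x | ∀ n, ‖x n‖ ≤ a n}

section SeqBox

variable {a : ℕ → ℝ}

lemma isClosed_seqBox (a : ℕ → ℝ) : IsClosed (seqBox a) := by
  simp only [seqBox, ofPred_forall]
  exact isClosed_iInter fun n =>
    isClosed_le (ZeroAtInftyContinuousMap.continuous_apply n).norm continuous_const

lemma convex_seqBox (a : ℕ → ℝ) : Convex ℝ (seqBox a) := by
  intro x hx y hy s t hs ht hst n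
  calc ‖s • x n + t • y n‖ ≤ s * ‖x n‖ + t * ‖y n‖ := by
        refine (norm_add_le _ _).trans_eq ?_
        rw [norm_smul, norm_smul, Real.norm_of_nonneg hs, Real.norm_of_nonneg ht]
    _ ≤ s * a n + t * a n := by gcongr <;> [exact hx n; exact hy n]
    _ = a n := by rw [← add_mul, hst, one_mul]

lemma zero_mem_seqBox (ha : 0 ≤ a) : (0 : C₀(ℕ, ℂ)) ∈ seqBox a := fun n => by
  simpa using ha n

lemma seqBox_subset_closedBall {R : ℝ} (hR : 0 ≤ R) (haR : ∀ n, a n ≤ R) :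
    seqBox a ⊆ closedBall 0 R := fun x hx =>
  mem_closedBall.2 <| dist_le_of_forall_dist_apply_le hR fun n => by
    simpa using (hx n).trans (haR n)

lemma exists_finset_seqBox_subset_iUnion_ball {R ρ : ℝ} {m : ℕ} (hρ : 0 < ρ) (hρR : ρ ≤ R)
    (haR : ∀ n, a n ≤ R) (ham : ∀ n, m ≤ n → a n ≤ ρ) :
    ∃ s : Finset C₀(ℕ, ℂ), (s.card : ℝ) ≤ (5 * R / ρ) ^ (2 * m) ∧
      seqBox a ⊆ ⋃ c ∈ s, ball c (2 * ρ) := by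
  classical
  obtain ⟨G, hGcard, hG⟩ := exists_finset_complex_net hρ hρR
  refine ⟨(Fintype.piFinset fun _ : Fin m => G).image ofFin, ?_, fun x hx => ?_⟩
  · calc (((Fintype.piFinset fun _ : Fin m => G).image ofFin).card : ℝ)
        ≤ ((Fintype.piFinset fun _ : Fin m => G).card : ℝ) := by
          exact_mod_cast Finset.card_image_le
      _ = (G.card : ℝ) ^ m := by simp
      _ ≤ ((5 * R / ρ) ^ 2) ^ m := by gcongr
      _ = (5 * R / ρ) ^ (2 * m) := by rw [pow_mul]
  · choose w hwG hw using fun k : Fin m => hG (x k) ((hx k).trans (haR k))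
    have hdist : dist x (ofFin w) ≤ ρ := by
      refine dist_le_of_forall_dist_apply_le hρ.le fun n => ?_
      rcases lt_or_ge n m with hn | hn
      · rw [ofFin_apply_of_lt w hn, dist_eq_norm]
        exact hw ⟨n, hn⟩
      · rw [ofFin_apply_of_le w hn, dist_zero_right]
        exact (hx n).trans (ham n hn)
    exact mem_iUnion₂.2 ⟨ofFin w, Finset.mem_image_of_mem _ (Fintype.mem_piFinset.2 hwG),
      mem_ball.2 (by linarith)⟩

lemma isCompact_seqBox (ha : Tendsto a atTop (𝓝 0)) : IsCompact (seqBox a) := by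
  obtain ⟨R, hR⟩ := ha.bddAbove_range
  refine (totallyBounded_iff.2 fun δ hδ => ?_).isCompact_of_isClosed (isClosed_seqBox a)
  set ρ := min (δ / 2) (max R 1)
  have hρ : 0 < ρ := lt_min (by positivity) (by positivity)
  obtain ⟨m, hm⟩ := eventually_atTop.1 (ha.eventually (ge_mem_nhds hρ))
  obtain ⟨s, -, hs⟩ := exists_finset_seqBox_subset_iUnion_ball hρ (min_le_right _ _)
    (fun n => (hR ⟨n, rfl⟩).trans (le_max_left R 1)) hm
  refine ⟨s, s.finite_toSet, hs.trans (iUnion₂_mono fun c _ => ball_subset_ball ?_)⟩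
  linarith [min_le_left (δ / 2) (max R 1)]

end SeqBox

abbrev geomBox (ε : ℝ) : Set C₀(ℕ, ℂ) := seqBox fun k => ε ^ (k + 1)

section GeomBox

variable {ε : ℝ}

lemma isCompact_geomBox (hε0 : 0 ≤ ε) (hε1 : ε < 1) : IsCompact (geomBox ε) :=
  isCompact_seqBox ((tendsto_pow_atTop_nhds_zero_of_lt_one hε0 hε1).comp (tendsto_add_atTop_nat 1))

lemma entropyNum_geomBox_le_one (hε0 : 0 < ε) (hε1 : ε < 1) (n : ℕ) :
    entropyNum n (geomBox ε) ≤ 1 := by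
  refine entropyNum_le_of_subset_ball one_pos
    ((seqBox_subset_closedBall hε0.le fun k => ?_).trans (closedBall_subset_ball hε1))
  simpa using pow_le_pow_of_le_one hε0.le hε1.le (Nat.le_add_left 1 k)

lemma entropyNum_geomBox_le_two_mul_pow (hε0 : 0 < ε) (hε1 : ε < 1) {m n : ℕ}
    (h : ((5 / ε) ^ 2) ^ (m ^ 2) ≤ 2 ^ (n - 1)) :
    entropyNum n (geomBox ε) ≤ 2 * ε ^ m := by
  have hρ : 0 < ε ^ m := pow_pos hε0 m
  obtain ⟨s, hs, hcover⟩ := exists_finset_seqBox_subset_iUnion_ball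
    (a := fun k => ε ^ (k + 1)) hρ (pow_le_one₀ hε0.le hε1.le) (fun k => pow_le_one₀ hε0.le hε1.le)
    fun k hk => pow_le_pow_of_le_one hε0.le hε1.le (Nat.le_succ_of_le hk)
  refine entropyNum_le_of_subset_iUnion_ball (by positivity) ?_ hcover
  have hcount : (5 * 1 / ε ^ m) ^ (2 * m) ≤ ((5 / ε) ^ 2) ^ (m ^ 2) := by
    rcases Nat.eq_zero_or_pos m with rfl | hm
    · simp
    calc (5 * 1 / ε ^ m) ^ (2 * m) ≤ (5 ^ m / ε ^ m) ^ (2 * m) := by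
          rw [mul_one]; gcongr; exact le_self_pow₀ (by norm_num) hm.ne'
      _ = ((5 / ε) ^ 2) ^ (m ^ 2) := by rw [← div_pow, ← pow_mul, ← pow_mul]; ring_nf
  exact_mod_cast hs.trans (hcount.trans h)

lemma exists_entropyNum_geomBox_le_two_mul_pow_sqrt (hε0 : 0 < ε) (hε1 : ε < 1) :
    ∃ b : ℕ, 0 < b ∧ ∀ n, entropyNum n (geomBox ε) ≤
      2 * ε ^ Nat.sqrt ((n - 1) / b) := by
  obtain ⟨b, hb⟩ := pow_unbounded_of_one_lt ((5 / ε) ^ 2) one_lt_two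
  refine ⟨b + 1, b.succ_pos, fun n => entropyNum_geomBox_le_two_mul_pow hε0 hε1 ?_⟩
  set m := Nat.sqrt ((n - 1) / (b + 1))
  have hm : (b + 1) * m ^ 2 ≤ n - 1 :=
    (Nat.mul_le_mul_left _ (Nat.sqrt_le' _)).trans (Nat.mul_div_le _ _)
  calc ((5 / ε) ^ 2) ^ (m ^ 2) ≤ ((2 : ℝ) ^ (b + 1)) ^ (m ^ 2) := by
        gcongr
        exact hb.le.trans (pow_le_pow_right₀ one_le_two b.le_succ)
    _ = 2 ^ ((b + 1) * m ^ 2) := by rw [← pow_mul]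
    _ ≤ 2 ^ (n - 1) := pow_le_pow_right₀ one_le_two hm

lemma summable_entropyNum_geomBox (hε0 : 0 < ε) (hε1 : ε < 1) :
    Summable fun n => entropyNum n (geomBox ε) := by
  obtain ⟨b, hb, hle⟩ := exists_entropyNum_geomBox_le_two_mul_pow_sqrt hε0 hε1
  have hk : ∀ n, n + 1 ≤ 2 * b * (Nat.sqrt ((n - 1) / b) + 1) ^ 2 := fun n => by
    have h := (Nat.div_lt_iff_lt_mul hb).1 (Nat.lt_succ_sqrt' ((n - 1) / b))
    have hpos : 1 ≤ b * (Nat.sqrt ((n - 1) / b) + 1) ^ 2 := Nat.one_le_iff_ne_zero.2 (by positivity)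
    have hn : n ≤ n - 1 + 1 := by omega
    nlinarith
  exact ((summable_pow_of_le_mul_sq hε0 hε1 hk).mul_left 2).of_nonneg_of_le
    (fun _ => entropyNum_nonneg) hle

lemma pow_le_entropyNum_geomBox (hε0 : 0 < ε) (hε1 : ε < 1) {m n : ℕ} (hnm : n < m ^ 2) :
    (ε / 2) ^ (m + 1) ≤ entropyNum n (geomBox ε) := by
  set δ := (ε / 2) ^ m
  have hδ : 0 < δ := by positivity
  let φ : (Fin m → Fin (2 ^ m)) → C₀(ℕ, ℂ) := fun v => ofFin fun k => ((v k : ℕ) * δ : ℝ)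
  have hφ : ∀ v (k : Fin m), φ v k = ((v k : ℕ) * δ : ℝ) := fun v k => ofFin_apply_of_lt _ k.isLt
  have hmem : ∀ v, φ v ∈ geomBox ε := fun v k => by
    rcases lt_or_ge k m with hk | hk
    · rw [hφ v ⟨k, hk⟩, Complex.norm_real, Real.norm_of_nonneg (by positivity)]
      calc ((v ⟨k, hk⟩ : ℕ) : ℝ) * δ ≤ 2 ^ m * δ := by
            gcongr; exact_mod_cast (v ⟨k, hk⟩).isLt.le
        _ = ε ^ m := by rw [← mul_pow]; ring_nf
        _ ≤ ε ^ (k + 1) := pow_le_pow_of_le_one hε0.le hε1.le hk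
    · rw [ofFin_apply_of_le _ hk, norm_zero]; positivity
  have hsep : Pairwise fun v w => δ ≤ dist (φ v) (φ w) := fun v w hvw => by
    obtain ⟨k, hk⟩ := Function.ne_iff.1 hvw
    have h1 : 1 ≤ dist ((v k : ℕ) : ℝ) (w k : ℕ) :=
      Nat.pairwise_one_le_dist (Fin.val_injective.ne hk)
    calc δ ≤ dist ((v k : ℕ) : ℝ) (w k : ℕ) * δ := le_mul_of_one_le_left hδ.le h1
      _ = dist (φ v k) (φ w k) := by
          rw [hφ, hφ, Complex.isometry_ofReal.dist_eq, Real.dist_eq, Real.dist_eq, ← sub_mul,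
            abs_mul, abs_of_pos hδ]
      _ ≤ dist (φ v) (φ w) := dist_apply_le_dist _ _ _
  have hcard : 2 ^ (n - 1) < Fintype.card (Fin m → Fin (2 ^ m)) := by
    rw [Fintype.card_fun, Fintype.card_fin, Fintype.card_fin, ← pow_mul, ← sq]
    exact Nat.pow_lt_pow_right one_lt_two (by omega)
  calc (ε / 2) ^ (m + 1) ≤ δ / 2 := by
        rw [pow_succ]
        nlinarith
    _ ≤ _ := le_entropyNum_of_separated (isCompact_geomBox hε0.le hε1).isBounded hmem hsep hcard

lemma tendsto_nat_sqrt_add_two_div :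
    Tendsto (fun n : ℕ => ((Nat.sqrt n : ℝ) + 2) / n) atTop (𝓝 0) := by
  have hsqrt : Tendsto Nat.sqrt atTop atTop :=
    tendsto_atTop_atTop.2 fun b => ⟨b * b, fun n hn => Nat.le_sqrt.2 hn⟩
  refine squeeze_zero' (Eventually.of_forall fun n => by positivity) ?_
    ((tendsto_natCast_atTop_atTop.comp hsqrt).const_div_atTop 3)
  filter_upwards [eventually_ge_atTop 1] with n hn
  have hs : (1 : ℝ) ≤ Nat.sqrt n := by exact_mod_cast Nat.sqrt_pos.2 hn
  have hsn : (Nat.sqrt n : ℝ) * Nat.sqrt n ≤ n := by exact_mod_cast Nat.sqrt_le n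
  rw [Function.comp_apply, div_le_div_iff₀ (by positivity) (by positivity)]
  nlinarith

lemma tendsto_entropyNum_geomBox_rpow (hε0 : 0 < ε) (hε1 : ε < 1) :
    Tendsto (fun n : ℕ => entropyNum n (geomBox ε) ^ ((1 : ℝ) / n))
      atTop (𝓝 1) := by
  have hlower : Tendsto (fun n : ℕ => (ε / 2) ^ (((Nat.sqrt n : ℝ) + 2) / n)) atTop (𝓝 1) := by
    simpa [Function.comp_def] using ((Real.continuousAt_const_rpow (by positivity)).tendsto).comp
      tendsto_nat_sqrt_add_two_div
  refine tendsto_of_tendsto_of_tendsto_of_le_of_le hlower tendsto_const_nhds (fun n => ?_) fun n =>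
    Real.rpow_le_one entropyNum_nonneg (entropyNum_geomBox_le_one hε0 hε1 n) (by positivity)
  have h := pow_le_entropyNum_geomBox hε0 hε1 (Nat.lt_succ_sqrt' n)
  calc (ε / 2) ^ (((Nat.sqrt n : ℝ) + 2) / n)
        = ((ε / 2) ^ (Nat.sqrt n + 1 + 1)) ^ ((1 : ℝ) / n) := by
        rw [← Real.rpow_natCast, ← Real.rpow_mul (by positivity)]
        push_cast; ring_nf
    _ ≤ _ := Real.rpow_le_rpow (by positivity) h (by positivity)

end GeomBox

open ZeroAtInfty in
/-- The set `K = {x ∈ c₀ : |xₙ| ≤ εⁿ}` is connected and compact, with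
`(eₙ(K))ₙ ∈ ℓ₁` and `limsup eₙ(K)^(1/n) = 1`. -/
theorem stmt7 (ε : ℝ) (hε0 : 0 < ε) (hε1 : ε < 1)
    (K : Set C₀(ℕ, ℂ)) (hK : K = {x : C₀(ℕ, ℂ) | ∀ n : ℕ, ‖x n‖ ≤ ε ^ (n + 1)}) :
    IsConnected K ∧ IsCompact K ∧ Summable (fun n : ℕ => entropyNum n K) ∧
    Filter.limsup (fun n : ℕ => entropyNum n K ^ ((1 : ℝ) / n)) atTop = 1 := by
  obtain rfl : K = geomBox ε := hK
  exact ⟨(convex_seqBox _).isConnected ⟨0, zero_mem_seqBox fun n => by positivity⟩,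
    isCompact_geomBox hε0.le hε1, summable_entropyNum_geomBox hε0 hε1,
    (tendsto_entropyNum_geomBox_rpow hε0 hε1).limsup_eq⟩
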